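/- arXiv:1602.04589 — 3 statements merged into one kernel-verified Lean document; each statement's English description precedes it below -/
import Mathlib

section
/- Let 0 < μ_a < μ_1 < 1. The function g_a(x) = kl(μ_1, m_a(x)) + x·kl(μ_a, m_a(x)), with m_a(x) = (μ_1 + x·μ_a)/(1+x), is differentiable on (0,∞) and its derivative is g_a'(x) = kl(μ_a, m_a(x)) > 0 for every x > 0. -/
/-- Bernoulli Kullback–Leibler divergence. -/
noncomputable def kl (x y : ℝ) : ℝ :=
  x * Real.log (x / y) + (1 - x) * Real.log ((1 - x) / (1 - y))

/-- The weighted mean `m_a(x) = (μ₁ + x μₐ)/(1+x)`. -/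
noncomputable def marm (μ1 μa x : ℝ) : ℝ := (μ1 + x * μa) / (1 + x)

/-- The function `g_a(x) = kl(μ₁, m_a(x)) + x·kl(μₐ, m_a(x))`. -/
noncomputable def garm (μ1 μa x : ℝ) : ℝ :=
  kl μ1 (marm μ1 μa x) + x * kl μa (marm μ1 μa x)

/-!
Envelope theorem: `g_a(x) = F(x, m_a(x))` with `F(x, y) = kl(μ₁, y) + x·kl(μₐ, y)`, and
`∂F/∂y (x, y) = ((y - μ₁) + x (y - μₐ)) / (y (1 - y))` vanishes at `y = m_a(x)`. Hence
`g_a'(x) = ∂F/∂x (x, m_a(x)) = kl(μₐ, m_a(x))`, which is positive by Gibbs' inequality since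
`m_a(x)` lies strictly between `μₐ` and `μ₁`.
-/

open Real Filter Topology

lemma sub_lt_mul_log_div {p q : ℝ} (hp : 0 ≤ p) (hq : 0 < q) (hpq : p ≠ q) :
    p - q < p * log (p / q) := by
  have h := self_sub_one_lt_mul_log (div_nonneg hp hq.le)
    (by rwa [ne_eq, div_eq_one_iff_eq hq.ne'])
  calc p - q = q * (p / q - 1) := by field_simp
    _ < q * (p / q * log (p / q)) := mul_lt_mul_of_pos_left h hq
    _ = p * log (p / q) := by field_simp

lemma kl_pos {p q : ℝ} (hp0 : 0 ≤ p) (hp1 : p ≤ 1) (hq0 : 0 < q) (hq1 : q < 1)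
    (hpq : p ≠ q) : 0 < kl p q := by
  have h₁ := sub_lt_mul_log_div hp0 hq0 hpq
  have h₂ := sub_lt_mul_log_div (sub_nonneg.2 hp1) (sub_pos.2 hq1) (by contrapose! hpq; linarith)
  unfold kl
  linarith

lemma kl_eq_sub_log {p y : ℝ} (hy0 : y ≠ 0) (hy1 : y ≠ 1) :
    kl p y = p * log p + (1 - p) * log (1 - p) - (p * log y + (1 - p) * log (1 - y)) := by
  have mul_log_div : ∀ a b : ℝ, b ≠ 0 → a * log (a / b) = a * log a - a * log b := by
    intro a b hb
    rcases eq_or_ne a 0 with rfl | ha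
    · simp
    · rw [log_div ha hb, mul_sub]
  rw [kl, mul_log_div p y hy0, mul_log_div (1 - p) (1 - y) (sub_ne_zero.2 hy1.symm)]
  ring

lemma hasDerivAt_kl_right (p : ℝ) {q : ℝ} (hq0 : q ≠ 0) (hq1 : q ≠ 1) :
    HasDerivAt (kl p) ((q - p) / (q * (1 - q))) q := by
  have hq1' : 1 - q ≠ 0 := sub_ne_zero.2 hq1.symm
  have hlog : HasDerivAt (fun y => p * log p + (1 - p) * log (1 - p)
      - (p * log y + (1 - p) * log (1 - y))) (-(p * q⁻¹ + (1 - p) * ((0 - 1) / (1 - q)))) q :=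
    (((hasDerivAt_log hq0).const_mul p).add
      ((((hasDerivAt_const q 1).sub (hasDerivAt_id q)).log hq1').const_mul (1 - p))).const_sub _
  have heq : kl p =ᶠ[𝓝 q] fun y => p * log p + (1 - p) * log (1 - p)
      - (p * log y + (1 - p) * log (1 - y)) := by
    filter_upwards [isOpen_ne.mem_nhds hq0, isOpen_ne.mem_nhds hq1] with y hy0 hy1
    exact kl_eq_sub_log hy0 hy1
  refine (hlog.congr_of_eventuallyEq heq).congr_deriv ?_
  field_simp
  ring

lemma hasDerivAt_marm (μ1 μa : ℝ) {x : ℝ} (hx : 1 + x ≠ 0) :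
    HasDerivAt (marm μ1 μa) ((μa - μ1) / (1 + x) ^ 2) x := by
  have h := (((hasDerivAt_id x).mul_const μa).const_add μ1).div
    ((hasDerivAt_id x).const_add 1) hx
  refine h.congr_deriv ?_
  simp only [id, one_mul]
  ring

lemma marm_mem_Ioo {μ1 μa x : ℝ} (hlt : μa < μ1) (hx : 0 < x) :
    marm μ1 μa x ∈ Set.Ioo μa μ1 := by
  have hd : 0 < 1 + x := by linarith
  rw [marm, Set.mem_Ioo, lt_div_iff₀ hd, div_lt_iff₀ hd]
  constructor <;> nlinarith

lemma marm_sub_add_mul_sub_eq_zero (μ1 μa : ℝ) {x : ℝ} (hx : 1 + x ≠ 0) :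
    (marm μ1 μa x - μ1) + x * (marm μ1 μa x - μa) = 0 := by
  rw [marm]
  field_simp
  ring

/-- `g_a` is differentiable on `(0,∞)`, with derivative
`g_a'(x) = kl(μₐ, m_a(x)) > 0`. -/
theorem garm_deriv (μ1 μa : ℝ) (h0 : 0 < μa) (hlt : μa < μ1) (h1 : μ1 < 1)
    (x : ℝ) (hx : 0 < x) :
    HasDerivAt (garm μ1 μa) (kl μa (marm μ1 μa x)) x ∧ 0 < kl μa (marm μ1 μa x) := by
  set m := marm μ1 μa x
  obtain ⟨hm_gt, hm_lt⟩ := marm_mem_Ioo hlt hx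
  have hx1 : 1 + x ≠ 0 := by positivity
  have hm0 : m ≠ 0 := (h0.trans hm_gt).ne'
  have hm1 : m ≠ 1 := (hm_lt.trans h1).ne
  refine ⟨?_, kl_pos h0.le (by linarith) (by linarith) (by linarith) hm_gt.ne⟩
  have hm := hasDerivAt_marm μ1 μa hx1
  have hg := ((hasDerivAt_kl_right μ1 hm0 hm1).comp x hm).add
    ((hasDerivAt_id x).mul ((hasDerivAt_kl_right μa hm0 hm1).comp x hm))
  refine hg.congr_deriv ?_
  have hstat : (m - μ1) + x * (m - μa) = 0 := marm_sub_add_mul_sub_eq_zero μ1 μa hx1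
  have hm1' : 1 - m ≠ 0 := sub_ne_zero.2 hm1.symm
  simp only [Function.comp_apply, id_eq, one_mul]
  field_simp
  linear_combination (μa - μ1) * hstat
end

section
/- Let K ≥ 2 and 0 < μ_K ≤ … ≤ μ_2 < μ_1 < 1. Let y* ∈ (0, kl(μ_1,μ_2)) be the unique solution of F_μ(y*) = 1, set x_1(y*) = 1 and, for a ≥ 2, x_a(y*) = g_a^{-1}(y*). Then the vector w* ∈ Σ_K given by w*_a = x_a(y*) / Σ_{b=1}^K x_b(y*) is the unique maximizer over Σ_K of the objective G(w) = min_{a≠1} (w_1+w_a)·I_{w_1/(w_1+w_a)}(μ_1,μ_a). -/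
/-- The parameterized Jensen–Shannon-type divergence `I_α`. -/
noncomputable def Ialpha (α x y : ℝ) : ℝ :=
  α * kl x (α * x + (1 - α) * y) + (1 - α) * kl y (α * x + (1 - α) * y)

/-- The probability simplex on `Fin K`. -/
def simplex (K : ℕ) : Set (Fin K → ℝ) :=
  {w | (∀ a, 0 ≤ w a) ∧ ∑ a, w a = 1}

lemma erase_zero_nonempty (K : ℕ) :
    ((Finset.univ : Finset (Fin (K + 2))).erase 0).Nonempty :=
  ⟨1, Finset.mem_erase.mpr ⟨by simp [Fin.ext_iff], Finset.mem_univ _⟩⟩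

/-- The objective `G(w) = min_{a ≠ 1} (w₁+wₐ)·I_{w₁/(w₁+wₐ)}(μ₁,μₐ)`, with the
convention that the `a`-th term is `0` when `w₁ + wₐ = 0`. -/
noncomputable def G (K : ℕ) (μ : Fin (K + 2) → ℝ) (w : Fin (K + 2) → ℝ) : ℝ :=
  ((Finset.univ : Finset (Fin (K + 2))).erase 0).inf' (erase_zero_nonempty K)
    (fun a => if w 0 + w a = 0 then 0
      else (w 0 + w a) * Ialpha (w 0 / (w 0 + w a)) (μ 0) (μ a))

/-!
For `u, v ≥ 0` with mean `m = (u p + v q) / (u + v)`, the compensation identity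
`u kl(p, z) + v kl(q, z) = (u + v) I_{u/(u+v)}(p, q) + (u + v) kl(m, z)` bounds the `a`-th term
of `G(w)` by `Bₐ(w) = w₁ kl(μ₁, mₐ) + wₐ kl(μₐ, mₐ)`, where `mₐ = mₐ(xₐ(y*))`, with equality
only if `wₐ = xₐ(y*) w₁`. Averaged with weights `1 / kl(μₐ, mₐ)`, the equation `F_μ(y*) = 1`
turns the `Bₐ(w)` into `Σ w = 1`, so `G(w) · Σₐ 1 / kl(μₐ, mₐ) ≤ 1`. Since
`gₐ(xₐ(y*)) = y*`, every term of `G(w*)` equals `y* / Σ_b x_b(y*)`, which attains this bound;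
conversely a maximizer meets every `Bₐ` with equality, and that pins it down to `w*`.
-/

open Real Set InformationTheory

lemma kl_eq_klFun (p : ℝ) {q : ℝ} (hq : q ∈ Ioo 0 1) :
    kl p q = q * klFun (p / q) + (1 - q) * klFun ((1 - p) / (1 - q)) := by
  have hq0 : q ≠ 0 := hq.1.ne'
  have hq1 : 1 - q ≠ 0 := by linarith [hq.2]
  simp only [kl, klFun]
  field_simp
  ring

lemma kl_nonneg {p q : ℝ} (hp : p ∈ Icc 0 1) (hq : q ∈ Ioo 0 1) : 0 ≤ kl p q := by
  rw [kl_eq_klFun p hq]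
  have h1 : 0 ≤ 1 - q := by linarith [hq.2]
  have h2 : 0 ≤ 1 - p := by linarith [hp.2]
  exact add_nonneg (mul_nonneg hq.1.le (klFun_nonneg (div_nonneg hp.1 hq.1.le)))
    (mul_nonneg h1 (klFun_nonneg (div_nonneg h2 h1)))

lemma kl_eq_zero_iff {p q : ℝ} (hp : p ∈ Icc 0 1) (hq : q ∈ Ioo 0 1) : kl p q = 0 ↔ p = q := by
  have hq1 : 0 < 1 - q := by linarith [hq.2]
  have hp1 : 0 ≤ 1 - p := by linarith [hp.2]
  constructor
  · intro h
    rw [kl_eq_klFun p hq] at h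
    have hfirst := (add_eq_zero_iff_of_nonneg
      (mul_nonneg hq.1.le (klFun_nonneg (div_nonneg hp.1 hq.1.le)))
      (mul_nonneg hq1.le (klFun_nonneg (div_nonneg hp1 hq1.le)))).1 h |>.1
    rw [mul_eq_zero, or_iff_right hq.1.ne', klFun_eq_zero_iff (div_nonneg hp.1 hq.1.le),
      div_eq_one_iff_eq hq.1.ne'] at hfirst
    exact hfirst
  · rintro rfl
    rw [kl_eq_klFun p hq, div_self hq.1.ne', div_self hq1.ne', klFun_one]
    ring

lemma kl_pos_s7 {p q : ℝ} (hp : p ∈ Icc 0 1) (hq : q ∈ Ioo 0 1) (hpq : p ≠ q) : 0 < kl p q :=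
  (kl_nonneg hp hq).lt_of_ne' ((kl_eq_zero_iff hp hq).not.2 hpq)

lemma kl_eq_kl_add {p m z : ℝ} (hp : p ∈ Ioo 0 1) (hm : m ∈ Ioo 0 1) (hz : z ∈ Ioo 0 1) :
    kl p z = kl p m + (p * log (m / z) + (1 - p) * log ((1 - m) / (1 - z))) := by
  have hp1 : 1 - p ≠ 0 := by linarith [hp.2]
  have hm1 : 1 - m ≠ 0 := by linarith [hm.2]
  have hz1 : 1 - z ≠ 0 := by linarith [hz.2]
  have e1 : p / z = p / m * (m / z) := by field_simp [hm.1.ne']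
  have e2 : (1 - p) / (1 - z) = (1 - p) / (1 - m) * ((1 - m) / (1 - z)) := by field_simp
  rw [kl, kl, e1, e2, log_mul (div_ne_zero hp.1.ne' hm.1.ne') (div_ne_zero hm.1.ne' hz.1.ne'),
    log_mul (div_ne_zero hp1 hm1) (div_ne_zero hm1 hz1)]
  ring

lemma kl_le_kl_of_le {p q₁ q₂ : ℝ} (hq₂ : 0 < q₂) (hq : q₂ ≤ q₁) (hqp : q₁ ≤ p) (hp : p < 1) :
    kl p q₁ ≤ kl p q₂ := by
  have hq₁ : q₁ ∈ Ioo 0 1 := ⟨hq₂.trans_le hq, hqp.trans_lt hp⟩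
  have hq₂' : q₂ ∈ Ioo 0 1 := ⟨hq₂, hq.trans_lt hq₁.2⟩
  have hlog₁ : 0 ≤ log (q₁ / q₂) := log_nonneg ((one_le_div hq₂).2 hq)
  have hlog₂ : log ((1 - q₁) / (1 - q₂)) ≤ 0 :=
    log_nonpos (div_nonneg (by linarith [hq₁.2]) (by linarith [hq₂'.2]))
      ((div_le_one (by linarith [hq₂'.2])).2 (by linarith))
  have hpq := kl_eq_kl_add ⟨hq₁.1.trans_le hqp, hp⟩ hq₁ hq₂'
  have hqq := kl_eq_kl_add hq₁ hq₁ hq₂'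
  have h0 := kl_nonneg (Ioo_subset_Icc_self hq₁) hq₂'
  rw [(kl_eq_zero_iff (Ioo_subset_Icc_self hq₁) hq₁).2 rfl] at hqq
  linarith [mul_nonneg (sub_nonneg.2 hqp) hlog₁, mul_nonneg (sub_nonneg.2 hqp) (neg_nonneg.2 hlog₂)]

lemma mul_Ialpha_eq (u v p q : ℝ) (huv : u + v ≠ 0) :
    (u + v) * Ialpha (u / (u + v)) p q
      = u * kl p ((u * p + v * q) / (u + v)) + v * kl q ((u * p + v * q) / (u + v)) := by
  have hmean : u / (u + v) * p + (1 - u / (u + v)) * q = (u * p + v * q) / (u + v) := by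
    field_simp
    ring
  rw [Ialpha, hmean]
  field_simp
  ring

lemma mul_kl_add_mul_kl {u v p q m z : ℝ} (hm : (u + v) * m = u * p + v * q)
    (hp : p ∈ Ioo 0 1) (hq : q ∈ Ioo 0 1) (hm' : m ∈ Ioo 0 1) (hz : z ∈ Ioo 0 1) :
    u * kl p z + v * kl q z = u * kl p m + v * kl q m + (u + v) * kl m z := by
  have hkl : kl m z = m * log (m / z) + (1 - m) * log ((1 - m) / (1 - z)) := rfl
  rw [kl_eq_kl_add hp hm' hz, kl_eq_kl_add hq hm' hz, hkl]
  linear_combination (log ((1 - m) / (1 - z)) - log (m / z)) * hm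

lemma Convex.mul_add_mul_div_mem {S : Set ℝ} (hS : Convex ℝ S) {u v p q : ℝ} (hu : 0 ≤ u)
    (hv : 0 ≤ v) (huv : 0 < u + v) (hp : p ∈ S) (hq : q ∈ S) : (u * p + v * q) / (u + v) ∈ S := by
  convert convex_iff_div.1 hS hp hq hu hv huv using 1
  simp only [smul_eq_mul]
  ring

lemma marm_mem_Ioo_s7 {p q x : ℝ} (hp : p ∈ Ioo 0 1) (hq : q ∈ Ioo 0 1) (hx : 0 ≤ x) :
    marm p q x ∈ Ioo 0 1 := by
  simpa only [marm, one_mul] using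
    (convex_Ioo 0 1).mul_add_mul_div_mem zero_le_one hx (by linarith) hp hq

lemma lt_marm {p q x : ℝ} (hqp : q < p) (hx : 0 ≤ x) : q < marm p q x := by
  rw [marm, lt_div_iff₀ (by linarith)]
  nlinarith

lemma kl_marm_pos {p q x : ℝ} (hp : p < 1) (hq : 0 < q) (hqp : q < p) (hx : 0 ≤ x) :
    0 < kl q (marm p q x) :=
  kl_pos_s7 ⟨hq.le, by linarith⟩ (marm_mem_Ioo_s7 ⟨hq.trans hqp, hp⟩ ⟨hq, hqp.trans hp⟩ hx)
    (lt_marm hqp hx).ne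

noncomputable def pairTerm (u v p q : ℝ) : ℝ :=
  if u + v = 0 then 0 else (u + v) * Ialpha (u / (u + v)) p q

lemma pairTerm_le {u v p q z : ℝ} (hu : 0 ≤ u) (hv : 0 ≤ v)
    (hp : p ∈ Ioo 0 1) (hq : q ∈ Ioo 0 1) (hz : z ∈ Ioo 0 1) :
    pairTerm u v p q ≤ u * kl p z + v * kl q z := by
  unfold pairTerm
  split_ifs with h
  · exact add_nonneg (mul_nonneg hu (kl_nonneg (Ioo_subset_Icc_self hp) hz))
      (mul_nonneg hv (kl_nonneg (Ioo_subset_Icc_self hq) hz))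
  · have huv : 0 < u + v := (add_nonneg hu hv).lt_of_ne' h
    have hm := (convex_Ioo 0 1).mul_add_mul_div_mem hu hv huv hp hq
    rw [mul_Ialpha_eq u v p q h, mul_kl_add_mul_kl (mul_div_cancel₀ _ h) hp hq hm hz]
    exact le_add_of_nonneg_right (mul_nonneg huv.le (kl_nonneg (Ioo_subset_Icc_self hm) hz))

lemma pairTerm_le_kl_marm {u v p q x : ℝ} (hu : 0 ≤ u) (hv : 0 ≤ v) (hp : p < 1) (hq : 0 < q)
    (hqp : q < p) (hx : 0 ≤ x) :
    pairTerm u v p q ≤ u * kl p (marm p q x) + v * kl q (marm p q x) :=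
  pairTerm_le hu hv ⟨hq.trans hqp, hp⟩ ⟨hq, hqp.trans hp⟩
    (marm_mem_Ioo_s7 ⟨hq.trans hqp, hp⟩ ⟨hq, hqp.trans hp⟩ hx)

lemma pairTerm_mul {c : ℝ} (p q : ℝ) {x : ℝ} (hc : 0 < c) (hx : 0 ≤ x) :
    pairTerm c (c * x) p q = c * garm p q x := by
  have h : c + c * x ≠ 0 := by positivity
  have hmean : (c * p + c * x * q) / (c + c * x) = marm p q x := by
    rw [marm, div_eq_div_iff h (by positivity)]
    ring
  rw [pairTerm, if_neg h, mul_Ialpha_eq _ _ _ _ h, hmean, garm]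
  ring

lemma eq_mul_of_pairTerm_eq {u v p q x : ℝ} (hu : 0 ≤ u) (hv : 0 ≤ v)
    (hp : p ∈ Ioo 0 1) (hq : q ∈ Ioo 0 1) (hpq : p ≠ q) (hx : 0 ≤ x)
    (hpos : 0 < pairTerm u v p q)
    (h : pairTerm u v p q = u * kl p (marm p q x) + v * kl q (marm p q x)) : v = x * u := by
  have h0 : u + v ≠ 0 := fun h0 => by simp [pairTerm, h0] at hpos
  have huv : 0 < u + v := (add_nonneg hu hv).lt_of_ne' h0
  have hm := (convex_Ioo 0 1).mul_add_mul_div_mem hu hv huv hp hq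
  have hz := marm_mem_Ioo_s7 hp hq hx
  rw [pairTerm, if_neg h0, mul_Ialpha_eq _ _ _ _ h0,
    mul_kl_add_mul_kl (mul_div_cancel₀ _ h0) hp hq hm hz, left_eq_add] at h
  have hmz := (kl_eq_zero_iff (Ioo_subset_Icc_self hm) hz).1
    ((mul_eq_zero.1 h).resolve_left h0)
  rw [marm, div_eq_div_iff h0 (by linarith)] at hmz
  have hfac : (p - q) * (x * u - v) = 0 := by linear_combination hmz
  linarith [(mul_eq_zero.1 hfac).resolve_left (sub_ne_zero.2 hpq)]

namespace Finset

variable {ι : Type*} {s : Finset ι} {f B c : ι → ℝ}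

theorem inf'_mul_sum_le_sum_mul (hs : s.Nonempty) (hc : ∀ a ∈ s, 0 ≤ c a)
    (hfB : ∀ a ∈ s, f a ≤ B a) : s.inf' hs f * ∑ a ∈ s, c a ≤ ∑ a ∈ s, c a * B a := by
  rw [mul_sum]
  refine sum_le_sum fun a ha => ?_
  rw [mul_comm]
  exact mul_le_mul_of_nonneg_left ((inf'_le f ha).trans (hfB a ha)) (hc a ha)

theorem eq_inf'_of_sum_mul_le_inf'_mul_sum (hs : s.Nonempty) (hc : ∀ a ∈ s, 0 < c a)
    (hfB : ∀ a ∈ s, f a ≤ B a) (h : ∑ a ∈ s, c a * B a ≤ s.inf' hs f * ∑ a ∈ s, c a) :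
    ∀ a ∈ s, f a = s.inf' hs f ∧ B a = s.inf' hs f := by
  have hterm : ∀ a ∈ s, 0 ≤ c a * (B a - s.inf' hs f) := fun a ha =>
    mul_nonneg (hc a ha).le (sub_nonneg.2 ((inf'_le f ha).trans (hfB a ha)))
  have hsum : ∑ a ∈ s, c a * (B a - s.inf' hs f) = 0 := by
    refine le_antisymm ?_ (sum_nonneg hterm)
    simp only [mul_sub, sum_sub_distrib, ← sum_mul]
    linarith
  intro a ha
  have hB : B a = s.inf' hs f := by
    have := (mul_eq_zero.1 ((sum_eq_zero_iff_of_nonneg hterm).1 hsum a ha)).resolve_left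
      (hc a ha).ne'
    linarith
  exact ⟨le_antisymm (hB ▸ hfB a ha) (inf'_le f ha), hB⟩

end Finset

section Allocation

variable {ι : Type*} {s : Finset ι}

lemma sum_inv_mul_add_mul_eq {α β v : ι → ℝ} (u : ℝ) (hβ : ∀ a ∈ s, β a ≠ 0)
    (hroot : ∑ a ∈ s, α a / β a = 1) :
    ∑ a ∈ s, (β a)⁻¹ * (u * α a + v a * β a) = u + ∑ a ∈ s, v a := by
  calc ∑ a ∈ s, (β a)⁻¹ * (u * α a + v a * β a) = ∑ a ∈ s, (u * (α a / β a) + v a) :=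
        Finset.sum_congr rfl fun a ha => by field_simp [hβ a ha]
    _ = u + ∑ a ∈ s, v a := by rw [Finset.sum_add_distrib, ← Finset.mul_sum, hroot, mul_one]

lemma mul_sum_inv_kl_marm_eq {p y : ℝ} {q ξ : ι → ℝ} (hp : p < 1)
    (hq : ∀ a ∈ s, 0 < q a ∧ q a < p) (hξ : ∀ a ∈ s, 0 ≤ ξ a)
    (hg : ∀ a ∈ s, garm p (q a) (ξ a) = y)
    (hroot : ∑ a ∈ s, kl p (marm p (q a) (ξ a)) / kl (q a) (marm p (q a) (ξ a)) = 1) :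
    y * ∑ a ∈ s, (kl (q a) (marm p (q a) (ξ a)))⁻¹ = 1 + ∑ a ∈ s, ξ a := by
  rw [Finset.mul_sum, ← hroot, ← Finset.sum_add_distrib]
  refine Finset.sum_congr rfl fun a ha => ?_
  have hβ := (kl_marm_pos hp (hq a ha).1 (hq a ha).2 (hξ a ha)).ne'
  rw [← hg a ha, garm]
  field_simp

end Allocation

lemma sum_ite_eq_add_sum_erase {ι : Type*} [Fintype ι] [DecidableEq ι] (i : ι) (c : ℝ)
    (f : ι → ℝ) : ∑ b, (if b = i then c else f b) = c + ∑ a ∈ Finset.univ.erase i, f a := by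
  rw [← Finset.add_sum_erase _ _ (Finset.mem_univ i), if_pos rfl]
  exact congrArg _ (Finset.sum_congr rfl fun a ha => if_neg (Finset.ne_of_mem_erase ha))

lemma div_sum_mem_simplex {n : ℕ} {v : Fin n → ℝ} (hv : ∀ a, 0 ≤ v a) (hpos : 0 < ∑ a, v a) :
    (fun a => v a / ∑ b, v b) ∈ simplex n :=
  ⟨fun a => div_nonneg (hv a) hpos.le, by rw [← Finset.sum_div, div_self hpos.ne']⟩

lemma eq_div_sum_of_eq_mul {ι : Type*} [Fintype ι] {w v : ι → ℝ} {t : ℝ}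
    (h : ∀ a, w a = v a * t) (hw : ∑ a, w a = 1) : w = fun a => v a / ∑ b, v b := by
  have hvt : (∑ b, v b) * t = 1 := by simpa only [Finset.sum_mul, ← h] using hw
  funext a
  rw [h a, eq_div_iff (left_ne_zero_of_mul_eq_one hvt)]
  linear_combination v a * hvt

section Objective

variable {K : ℕ} {μ ξ : Fin (K + 2) → ℝ}

lemma G_eq_inf'_pairTerm (K : ℕ) (μ w : Fin (K + 2) → ℝ) :
    G K μ w = (Finset.univ.erase 0).inf' (erase_zero_nonempty K)
      (fun a => pairTerm (w 0) (w a) (μ 0) (μ a)) := rfl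

lemma G_div_eq {y S : ℝ} (hξ : ∀ a ≠ 0, 0 ≤ ξ a) (hg : ∀ a ≠ 0, garm (μ 0) (μ a) (ξ a) = y)
    (hS : 0 < S) : G K μ (fun a => (if a = 0 then 1 else ξ a) / S) = S⁻¹ * y := by
  rw [G_eq_inf'_pairTerm]
  refine Finset.inf'_eq_of_forall _ _ fun a ha => ?_
  have ha0 := Finset.ne_of_mem_erase ha
  simp only [↓reduceIte, if_neg ha0, div_eq_inv_mul, mul_one]
  rw [pairTerm_mul _ _ (inv_pos.2 hS) (hξ a ha0), hg a ha0]

lemma G_mul_sum_inv_le (h1 : μ 0 < 1) (hq : ∀ a ≠ 0, 0 < μ a ∧ μ a < μ 0)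
    (hξ : ∀ a ≠ 0, 0 ≤ ξ a)
    (hroot : ∑ a ∈ Finset.univ.erase 0,
      kl (μ 0) (marm (μ 0) (μ a) (ξ a)) / kl (μ a) (marm (μ 0) (μ a) (ξ a)) = 1)
    {w : Fin (K + 2) → ℝ} (hw : w ∈ simplex (K + 2)) :
    G K μ w * ∑ a ∈ Finset.univ.erase 0, (kl (μ a) (marm (μ 0) (μ a) (ξ a)))⁻¹ ≤ 1 := by
  have hβ a (ha : a ≠ 0) := kl_marm_pos h1 (hq a ha).1 (hq a ha).2 (hξ a ha)
  rw [← hw.2, ← Finset.add_sum_erase _ _ (Finset.mem_univ 0),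
    ← sum_inv_mul_add_mul_eq (w 0) (fun a ha => (hβ a (Finset.ne_of_mem_erase ha)).ne') hroot]
  refine Finset.inf'_mul_sum_le_sum_mul _ (fun a ha => ?_) fun a ha => ?_ <;>
    obtain ⟨ha, -⟩ := Finset.mem_erase.1 ha
  · exact (inv_pos.2 (hβ a ha)).le
  · exact pairTerm_le_kl_marm (hw.1 0) (hw.1 a) h1 (hq a ha).1 (hq a ha).2 (hξ a ha)

lemma eq_div_sum_of_one_le_G_mul_sum_inv (h1 : μ 0 < 1) (hq : ∀ a ≠ 0, 0 < μ a ∧ μ a < μ 0)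
    (hξ : ∀ a ≠ 0, 0 ≤ ξ a)
    (hroot : ∑ a ∈ Finset.univ.erase 0,
      kl (μ 0) (marm (μ 0) (μ a) (ξ a)) / kl (μ a) (marm (μ 0) (μ a) (ξ a)) = 1)
    {w : Fin (K + 2) → ℝ} (hw : w ∈ simplex (K + 2))
    (h : 1 ≤ G K μ w * ∑ a ∈ Finset.univ.erase 0, (kl (μ a) (marm (μ 0) (μ a) (ξ a)))⁻¹) :
    w = fun a => (if a = 0 then 1 else ξ a) / ∑ b, (if b = 0 then 1 else ξ b) := by
  have hβ a (ha : a ∈ Finset.univ.erase 0) : 0 < kl (μ a) (marm (μ 0) (μ a) (ξ a)) := by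
    obtain ⟨ha, -⟩ := Finset.mem_erase.1 ha
    exact kl_marm_pos h1 (hq a ha).1 (hq a ha).2 (hξ a ha)
  have hsum : w 0 + ∑ a ∈ Finset.univ.erase 0, w a = 1 := by
    rw [Finset.add_sum_erase _ _ (Finset.mem_univ 0), hw.2]
  rw [G_eq_inf'_pairTerm] at h
  have hinf := pos_of_mul_pos_left (one_pos.trans_le h)
    (Finset.sum_nonneg fun a ha => (inv_pos.2 (hβ a ha)).le)
  have heq := Finset.eq_inf'_of_sum_mul_le_inf'_mul_sum _ (fun a ha => inv_pos.2 (hβ a ha))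
    (fun a ha => by
      obtain ⟨ha, -⟩ := Finset.mem_erase.1 ha
      exact pairTerm_le_kl_marm (hw.1 0) (hw.1 a) h1 (hq a ha).1 (hq a ha).2 (hξ a ha))
    ((sum_inv_mul_add_mul_eq (w 0) (fun a ha => (hβ a ha).ne') hroot).trans_le (hsum ▸ h))
  refine eq_div_sum_of_eq_mul (t := w 0) (fun a => ?_) hw.2
  by_cases ha : a = 0
  · rw [if_pos ha, one_mul, ha]
  · obtain ⟨hf, hB⟩ := heq a (Finset.mem_erase.2 ⟨ha, Finset.mem_univ a⟩)
    rw [if_neg ha]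
    exact eq_mul_of_pairTerm_eq (hw.1 0) (hw.1 a) ⟨(hq a ha).1.trans (hq a ha).2, h1⟩
      ⟨(hq a ha).1, (hq a ha).2.trans h1⟩ (hq a ha).2.ne' (hξ a ha) (hf ▸ hinf) (hf.trans hB.symm)

end Objective

/-- Arm `1` of the paper is index `0`, arm `2` is index `1`. -/
theorem wstar_unique_maximizer (K : ℕ) (μ : Fin (K + 2) → ℝ)
    (hpos : ∀ a, 0 < μ a) (h1 : μ 0 < 1) (h2 : μ 1 < μ 0)
    (hsort : ∀ a b : Fin (K + 2), a ≠ 0 → a ≤ b → μ b ≤ μ a)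
    (x : Fin (K + 2) → ℝ → ℝ)
    (hx : ∀ a : Fin (K + 2), a ≠ 0 → ∀ y ∈ Set.Ico 0 (kl (μ 0) (μ a)),
      0 ≤ x a y ∧ garm (μ 0) (μ a) (x a y) = y)
    (ystar : ℝ) (hystar : ystar ∈ Set.Ioo 0 (kl (μ 0) (μ 1)))
    (hroot : ∑ a ∈ Finset.univ.erase (0 : Fin (K + 2)),
      kl (μ 0) (marm (μ 0) (μ a) (x a ystar)) /
        kl (μ a) (marm (μ 0) (μ a) (x a ystar)) = 1) :
    let xv : Fin (K + 2) → ℝ := fun a => if a = 0 then 1 else x a ystar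
    let wstar : Fin (K + 2) → ℝ := fun a => xv a / ∑ b, xv b
    wstar ∈ simplex (K + 2) ∧
    (∀ w ∈ simplex (K + 2), G K μ w ≤ G K μ wstar) ∧
    (∀ w ∈ simplex (K + 2), (∀ w' ∈ simplex (K + 2), G K μ w' ≤ G K μ w) → w = wstar) := by
  intro xv wstar
  have hle₁ a (ha : a ≠ 0) : μ a ≤ μ 1 := hsort 1 a one_ne_zero (Fin.one_le_of_ne_zero ha)
  have hq a (ha : a ≠ 0) : 0 < μ a ∧ μ a < μ 0 := ⟨hpos a, (hle₁ a ha).trans_lt h2⟩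
  have hxa a (ha : a ≠ 0) : 0 ≤ x a ystar ∧ garm (μ 0) (μ a) (x a ystar) = ystar :=
    hx a ha ystar ⟨hystar.1.le, hystar.2.trans_le (kl_le_kl_of_le (hpos a) (hle₁ a ha) h2.le h1)⟩
  have hS : ∑ b, xv b = 1 + ∑ a ∈ Finset.univ.erase 0, x a ystar :=
    sum_ite_eq_add_sum_erase 0 1 fun a => x a ystar
  have hSpos : 0 < ∑ b, xv b := hS ▸ add_pos_of_pos_of_nonneg one_pos
    (Finset.sum_nonneg fun a ha => (hxa a (Finset.ne_of_mem_erase ha)).1)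
  set T := ∑ a ∈ Finset.univ.erase 0, (kl (μ a) (marm (μ 0) (μ a) (x a ystar)))⁻¹
  have hT : ystar * T = ∑ b, xv b := hS ▸ mul_sum_inv_kl_marm_eq h1
    (fun a ha => hq a (Finset.ne_of_mem_erase ha))
    (fun a ha => (hxa a (Finset.ne_of_mem_erase ha)).1)
    (fun a ha => (hxa a (Finset.ne_of_mem_erase ha)).2) hroot
  have hTpos : 0 < T := pos_of_mul_pos_right (hT ▸ hSpos) hystar.1.le
  have hGstar : G K μ wstar * T = 1 := by
    rw [G_div_eq (fun a ha => (hxa a ha).1) (fun a ha => (hxa a ha).2) hSpos, mul_assoc, hT,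
      inv_mul_cancel₀ hSpos.ne']
  have hwstar : wstar ∈ simplex (K + 2) :=
    div_sum_mem_simplex (fun a => show 0 ≤ ite _ _ _ by
      split_ifs with ha; exacts [zero_le_one, (hxa a ha).1]) hSpos
  refine ⟨hwstar, fun w hw => ?_, fun w hw hmax => ?_⟩
  · exact le_of_mul_le_mul_right
      ((G_mul_sum_inv_le h1 hq (fun a ha => (hxa a ha).1) hroot hw).trans hGstar.ge) hTpos
  · exact eq_div_sum_of_one_le_G_mul_sum_inv h1 hq (fun a ha => (hxa a ha).1) hroot hw
      (hGstar ▸ mul_le_mul_of_nonneg_right (hmax wstar hwstar) hTpos.le)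
end

section
/- Let K ≥ 2 and 0 < μ_K ≤ … ≤ μ_2 < μ_1 < 1. If w* ∈ Σ_K is a maximizer over Σ_K of the objective G(w) = min_{a≠1} (w_1+w_a)·I_{w_1/(w_1+w_a)}(μ_1,μ_a), then w*_2 ≥ w*_3 ≥ … ≥ w*_K. -/
/-!
The `a`-th term of `G` is `J(wₐ; μₐ) = w₁ kl(μ₁, m) + wₐ kl(μₐ, m)` with `m` the mixture
`(w₁μ₁ + wₐμₐ)/(w₁ + wₐ)`. Since `kl x z - kl x m` is affine in `x`, `J` is the minimum over `z`
of `w₁ kl(μ₁, z) + wₐ kl(μₐ, z)`, hence increasing in the weights (strictly, when the other one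
is positive) and decreasing in `μₐ`. At a maximizer `w*` every term equals the minimum `G(w*)`,
so if `w*ₐ < w*_b` for `a < b` then `G(w*) = J(w*ₐ; μₐ) < J(w*_b; μₐ) ≤ J(w*_b; μ_b) = G(w*)`.
-/

open Real Set InformationTheory

lemma mul_log_div {z : ℝ} (x : ℝ) (hz : z ≠ 0) : x * log (x / z) = x * log x - x * log z := by
  rcases eq_or_ne x 0 with rfl | hx
  · simp
  · rw [log_div hx hz, mul_sub]

lemma kl_eq_sub {y : ℝ} (x : ℝ) (hy₀ : y ≠ 0) (hy₁ : y ≠ 1) :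
    kl x y = x * log x + (1 - x) * log (1 - x) - x * log y - (1 - x) * log (1 - y) := by
  rw [kl, mul_log_div x hy₀, mul_log_div (1 - x) (sub_ne_zero.mpr hy₁.symm)]
  ring

@[simp]
lemma kl_self (x : ℝ) : kl x x = 0 := by
  rcases eq_or_ne x 1 with rfl | hx₁
  · simp [kl]
  rcases eq_or_ne x 0 with rfl | hx₀
  · simp [kl]
  rw [kl_eq_sub x hx₀ hx₁]
  ring

lemma kl_eq_mul_klFun {y : ℝ} (x : ℝ) (hy₀ : y ≠ 0) (hy₁ : y ≠ 1) :
    kl x y = y * klFun (x / y)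
      + (1 - y) * klFun ((1 - x) / (1 - y)) := by
  have hy₁' : 1 - y ≠ 0 := sub_ne_zero.mpr hy₁.symm
  simp only [kl, klFun]
  field_simp
  ring

lemma kl_nonneg_s9 {x y : ℝ} (hx₀ : 0 ≤ x) (hx₁ : x ≤ 1) (hy₀ : 0 < y) (hy₁ : y < 1) :
    0 ≤ kl x y := by
  rw [kl_eq_mul_klFun x hy₀.ne' hy₁.ne]
  have := klFun_nonneg (div_nonneg hx₀ hy₀.le)
  have := klFun_nonneg (div_nonneg (sub_nonneg.2 hx₁) (sub_pos.2 hy₁).le)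
  have : 0 < 1 - y := sub_pos.2 hy₁
  positivity

lemma kl_pos_s9 {x y : ℝ} (hx₀ : 0 ≤ x) (hx₁ : x ≤ 1) (hy₀ : 0 < y) (hy₁ : y < 1) (hxy : x ≠ y) :
    0 < kl x y := by
  rw [kl_eq_mul_klFun x hy₀.ne' hy₁.ne]
  have hy₁' : 0 < 1 - y := sub_pos.2 hy₁
  have h₁ : 0 < klFun (x / y) :=
    (klFun_nonneg (div_nonneg hx₀ hy₀.le)).lt_of_ne' fun h ↦
      hxy ((div_eq_one_iff_eq hy₀.ne').1 ((klFun_eq_zero_iff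
        (div_nonneg hx₀ hy₀.le)).1 h))
  have h₂ := klFun_nonneg (div_nonneg (sub_nonneg.2 hx₁) hy₁'.le)
  positivity

noncomputable def logit (m : ℝ) : ℝ := log m - log (1 - m)

lemma logit_le_logit {m z : ℝ} (hm : 0 < m) (hmz : m ≤ z) (hz : z < 1) : logit m ≤ logit z := by
  have := log_le_log hm hmz
  have := log_le_log (sub_pos.2 hz) (sub_le_sub_left hmz 1)
  unfold logit
  linarith

lemma kl_sub_kl {m z : ℝ} (x : ℝ) (hm₀ : m ≠ 0) (hm₁ : m ≠ 1) (hz₀ : z ≠ 0) (hz₁ : z ≠ 1) :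
    kl x z - kl x m = kl m z + (x - m) * (logit m - logit z) := by
  rw [kl_eq_sub x hz₀ hz₁, kl_eq_sub x hm₀ hm₁, kl_eq_sub m hz₀ hz₁, logit, logit]
  ring

lemma kl_monotoneOn {x : ℝ} (hx : 0 < x) : MonotoneOn (kl x) (Ico x 1) := by
  intro y₁ ⟨hxy₁, _⟩ y₂ ⟨_, hy₂⟩ hy
  have hy₁ : 0 < y₁ := hx.trans_le hxy₁
  have h := kl_sub_kl x hy₁.ne' (hy.trans_lt hy₂).ne (hy₁.trans_le hy).ne' hy₂.ne
  have := kl_nonneg_s9 hy₁.le (hy.trans hy₂.le) (hy₁.trans_le hy) hy₂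
  nlinarith [logit_le_logit hy₁ hy hy₂]

lemma kl_antitoneOn {x : ℝ} (hx : x < 1) : AntitoneOn (kl x) (Ioc 0 x) := by
  intro y₁ ⟨hy₁, _⟩ y₂ ⟨_, hy₂x⟩ hy
  have hy₂ : 0 < y₂ := hy₁.trans_le hy
  have h := kl_sub_kl x hy₂.ne' (hy₂x.trans_lt hx).ne hy₁.ne' (hy.trans_lt (hy₂x.trans_lt hx)).ne
  have := kl_nonneg_s9 hy₂.le (hy₂x.trans hx.le) hy₁ (hy.trans_lt (hy₂x.trans_lt hx))
  nlinarith [logit_le_logit hy₁ hy (hy₂x.trans_lt hx)]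

lemma kl_antitoneOn_left {z : ℝ} (hz : z < 1) : AntitoneOn (fun x ↦ kl x z) (Ioc 0 z) := by
  intro x₁ ⟨hx₁, _⟩ x₂ ⟨_, hx₂z⟩ hx
  have hx₂ : 0 < x₂ := hx₁.trans_le hx
  have h := kl_sub_kl x₁ hx₂.ne' (hx₂z.trans_lt hz).ne (hx₂.trans_le hx₂z).ne' hz.ne
  have := kl_nonneg_s9 hx₁.le (hx.trans (hx₂z.trans hz.le)) hx₂ (hx₂z.trans_lt hz)
  nlinarith [logit_le_logit hx₂ hx₂z hz]

noncomputable def mixMean (p q x y : ℝ) : ℝ := (p * x + q * y) / (p + q)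

noncomputable def weightedJS (p q x y : ℝ) : ℝ :=
  p * kl x (mixMean p q x y) + q * kl y (mixMean p q x y)

section weightedJS

variable {p q p₁ p₂ q₁ q₂ x y : ℝ}

lemma mixMean_mem_Icc (hp : 0 ≤ p) (hq : 0 ≤ q) (hpq : 0 < p + q) (hyx : y ≤ x) :
    mixMean p q x y ∈ Icc y x := by
  rw [mixMean, mem_Icc, le_div_iff₀ hpq, div_le_iff₀ hpq]
  constructor <;> nlinarith

lemma lt_mixMean (hp : 0 < p) (hq : 0 ≤ q) (hyx : y < x) : y < mixMean p q x y := by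
  rw [mixMean, lt_div_iff₀ (by linarith)]
  nlinarith

lemma mixMean_lt (hp : 0 ≤ p) (hq : 0 < q) (hyx : y < x) : mixMean p q x y < x := by
  rw [mixMean, div_lt_iff₀ (by linarith)]
  nlinarith

@[simp]
lemma weightedJS_zero_left (q x y : ℝ) : weightedJS 0 q x y = 0 := by
  rcases eq_or_ne q 0 with rfl | hq
  · simp [weightedJS]
  · simp [weightedJS, mixMean, hq]

@[simp]
lemma weightedJS_zero_right (p x y : ℝ) : weightedJS p 0 x y = 0 := by
  rcases eq_or_ne p 0 with rfl | hp
  · simp [weightedJS]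
  · simp [weightedJS, mixMean, hp]

lemma mul_kl_add_mul_kl_s9 (hpq : p + q ≠ 0) (hm₀ : mixMean p q x y ≠ 0)
    (hm₁ : mixMean p q x y ≠ 1) {z : ℝ} (hz₀ : z ≠ 0) (hz₁ : z ≠ 1) :
    p * kl x z + q * kl y z = weightedJS p q x y + (p + q) * kl (mixMean p q x y) z := by
  have hm : (p + q) * mixMean p q x y = p * x + q * y := mul_div_cancel₀ _ hpq
  have hx := kl_sub_kl x hm₀ hm₁ hz₀ hz₁
  have hy := kl_sub_kl y hm₀ hm₁ hz₀ hz₁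
  rw [weightedJS]
  linear_combination p * hx + q * hy + (logit z - logit (mixMean p q x y)) * hm

lemma weightedJS_le_add (hp : 0 ≤ p) (hq : 0 ≤ q) (hpq : 0 < p + q) (hy : 0 < y) (hyx : y ≤ x)
    (hx : x < 1) {z : ℝ} (hz₀ : 0 < z) (hz₁ : z < 1) :
    weightedJS p q x y ≤ p * kl x z + q * kl y z := by
  have hmI := mixMean_mem_Icc hp hq hpq hyx
  have hm₀ := hy.trans_le hmI.1
  have hm₁ := hmI.2.trans_lt hx
  rw [mul_kl_add_mul_kl_s9 hpq.ne' hm₀.ne' hm₁.ne hz₀.ne' hz₁.ne]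
  exact le_add_of_nonneg_right (mul_nonneg hpq.le (kl_nonneg_s9 hm₀.le hm₁.le hz₀ hz₁))

lemma weightedJS_add_le (hp₁ : 0 ≤ p₁) (hq₁ : 0 ≤ q₁) (hpq₁ : 0 < p₁ + q₁) (hp : p₁ ≤ p₂)
    (hq : q₁ ≤ q₂) (hy : 0 < y) (hyx : y ≤ x) (hx : x < 1) :
    weightedJS p₁ q₁ x y + (p₂ - p₁) * kl x (mixMean p₂ q₂ x y)
      + (q₂ - q₁) * kl y (mixMean p₂ q₂ x y) ≤ weightedJS p₂ q₂ x y := by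
  have hmI := mixMean_mem_Icc (hp₁.trans hp) (hq₁.trans hq) (by linarith) hyx
  have := weightedJS_le_add hp₁ hq₁ hpq₁ hy hyx hx (hy.trans_le hmI.1) (hmI.2.trans_lt hx)
  simp only [weightedJS] at this ⊢
  linarith

lemma weightedJS_le_weightedJS (hp₁ : 0 ≤ p₁) (hq₁ : 0 ≤ q₁) (hpq₁ : 0 < p₁ + q₁)
    (hp : p₁ ≤ p₂) (hq : q₁ ≤ q₂) (hy : 0 < y) (hyx : y ≤ x) (hx : x < 1) :
    weightedJS p₁ q₁ x y ≤ weightedJS p₂ q₂ x y := by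
  have hmI := mixMean_mem_Icc (hp₁.trans hp) (hq₁.trans hq) (by linarith) hyx
  have hm₀ := hy.trans_le hmI.1
  have hm₁ := hmI.2.trans_lt hx
  have := mul_nonneg (sub_nonneg.2 hp) (kl_nonneg_s9 (hy.le.trans hyx) hx.le hm₀ hm₁)
  have := mul_nonneg (sub_nonneg.2 hq) (kl_nonneg_s9 hy.le (hyx.trans hx.le) hm₀ hm₁)
  linarith [weightedJS_add_le hp₁ hq₁ hpq₁ hp hq hy hyx hx]

lemma weightedJS_lt_weightedJS_left (hp₁ : 0 ≤ p₁) (hq : 0 < q) (hp : p₁ < p₂) (hy : 0 < y)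
    (hyx : y < x) (hx : x < 1) : weightedJS p₁ q x y < weightedJS p₂ q x y := by
  have hmI := mixMean_mem_Icc (hp₁.trans hp.le) hq.le (by linarith) hyx.le
  have hm₀ := hy.trans_le hmI.1
  have hm₁ := hmI.2.trans_lt hx
  have := mul_pos (sub_pos.2 hp) (kl_pos_s9 (hy.trans hyx).le hx.le hm₀ hm₁
    (mixMean_lt (hp₁.trans hp.le) hq hyx).ne')
  linarith [weightedJS_add_le hp₁ hq.le (by linarith) hp.le le_rfl hy hyx.le hx]

lemma weightedJS_lt_weightedJS_right (hp : 0 < p) (hq₁ : 0 ≤ q₁) (hq : q₁ < q₂) (hy : 0 < y)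
    (hyx : y < x) (hx : x < 1) : weightedJS p q₁ x y < weightedJS p q₂ x y := by
  have hmI := mixMean_mem_Icc hp.le (hq₁.trans hq.le) (by linarith) hyx.le
  have hm₀ := hy.trans_le hmI.1
  have hm₁ := hmI.2.trans_lt hx
  have := mul_pos (sub_pos.2 hq) (kl_pos_s9 hy.le (hyx.trans hx).le hm₀ hm₁
    (lt_mixMean hp (hq₁.trans hq.le) hyx).ne)
  linarith [weightedJS_add_le hp.le hq₁ (by linarith) le_rfl hq.le hy hyx.le hx]

lemma weightedJS_le_weightedJS_add (hp : 0 ≤ p) (hq₁ : 0 ≤ q₁) (hpq₁ : 0 < p + q₁)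
    (hq : q₁ ≤ q₂) (hy : 0 < y) (hyx : y ≤ x) (hx : x < 1) :
    weightedJS p q₂ x y ≤ weightedJS p q₁ x y + (q₂ - q₁) * kl y x := by
  have hmI := mixMean_mem_Icc hp hq₁ hpq₁ hyx
  have hm₀ := hy.trans_le hmI.1
  have hle := weightedJS_le_add hp (hq₁.trans hq) (by linarith) hy hyx hx hm₀
    (hmI.2.trans_lt hx)
  have hkl : kl y (mixMean p q₁ x y) ≤ kl y x :=
    kl_monotoneOn hy ⟨hmI.1, hmI.2.trans_lt hx⟩ ⟨hyx, hx⟩ hmI.2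
  have := mul_le_mul_of_nonneg_left hkl (sub_nonneg.2 hq)
  simp only [weightedJS] at hle ⊢
  linarith

lemma weightedJS_antitoneOn (hp : 0 ≤ p) (hq : 0 ≤ q) (hpq : 0 < p + q) (hx : x < 1) :
    AntitoneOn (weightedJS p q x) (Ioc 0 x) := by
  intro y' ⟨hy', hy'x⟩ y ⟨_, hyx⟩ hy
  set m := mixMean p q x y'
  have hmI : m ∈ Icc y' x := mixMean_mem_Icc hp hq hpq hy'x
  have hm₀ : 0 < m := hy'.trans_le hmI.1
  have hm₁ : m < 1 := hmI.2.trans_lt hx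
  have hy₀ : 0 < y := hy'.trans_le hy
  rcases le_or_gt y m with hym | hmy
  · calc weightedJS p q x y ≤ p * kl x m + q * kl y m :=
          weightedJS_le_add hp hq hpq hy₀ hyx hx hm₀ hm₁
      _ ≤ p * kl x m + q * kl y' m := by
        gcongr
        exact kl_antitoneOn_left hm₁ ⟨hy', hy.trans hym⟩ ⟨hy₀, hym⟩ hy
      _ = weightedJS p q x y' := rfl
  · calc weightedJS p q x y ≤ p * kl x y + q * kl y y :=
          weightedJS_le_add hp hq hpq hy₀ hyx hx hy₀ (hyx.trans_lt hx)
      _ = p * kl x y := by simp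
      _ ≤ p * kl x m := by
        gcongr
        exact kl_antitoneOn hx ⟨hm₀, hmI.2⟩ ⟨hy₀, hyx⟩ hmy.le
      _ ≤ weightedJS p q x y' :=
        le_add_of_nonneg_right (mul_nonneg hq (kl_nonneg_s9 hy'.le (hy'x.trans hx.le) hm₀ hm₁))

lemma weightedJS_pos (hp : 0 < p) (hq : 0 < q) (hy : 0 < y) (hyx : y < x) (hx : x < 1) :
    0 < weightedJS p q x y := by
  simpa using weightedJS_lt_weightedJS_left le_rfl hq hp hy hyx hx

lemma ite_Ialpha_eq_weightedJS (hp : 0 ≤ p) (hq : 0 ≤ q) :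
    (if p + q = 0 then 0 else (p + q) * Ialpha (p / (p + q)) x y) = weightedJS p q x y := by
  split_ifs with hpq
  · obtain rfl : p = 0 := by linarith
    simp
  · have hα : p / (p + q) * x + (1 - p / (p + q)) * y = mixMean p q x y := by
      rw [mixMean]; field_simp; ring
    rw [Ialpha, hα, weightedJS]
    field_simp
    ring

end weightedJS

lemma inv_natCast_mem_simplex (n : ℕ) [NeZero n] : (fun _ ↦ (n : ℝ)⁻¹) ∈ simplex n := by
  refine ⟨fun _ ↦ by positivity, ?_⟩
  simp [NeZero.ne n]

lemma add_smul_single_sub_single_mem_simplex {n : ℕ} {w : Fin n → ℝ} (hw : w ∈ simplex n)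
    (i : Fin n) {j : Fin n} {ε : ℝ} (hε : 0 ≤ ε) (hεj : ε ≤ w j) :
    w + ε • (Pi.single i 1 - Pi.single j 1) ∈ simplex n := by
  refine ⟨fun a ↦ ?_, ?_⟩
  · have := hw.1 a
    simp only [Pi.add_apply, Pi.smul_apply, Pi.sub_apply, Pi.single_apply, smul_eq_mul]
    split_ifs with hi hj hj <;> subst_vars <;> linarith
  · simp [Finset.sum_add_distrib, ← Finset.mul_sum, hw.2]

section G

variable {K : ℕ} {μ w : Fin (K + 2) → ℝ}

lemma G_eq_inf' (hw : ∀ a, 0 ≤ w a) :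
    G K μ w = (Finset.univ.erase 0).inf' (erase_zero_nonempty K)
      fun d ↦ weightedJS (w 0) (w d) (μ 0) (μ d) :=
  Finset.inf'_congr _ rfl fun d _ ↦ ite_Ialpha_eq_weightedJS (hw 0) (hw d)

lemma G_le_weightedJS (hw : ∀ a, 0 ≤ w a) {d : Fin (K + 2)} (hd : d ≠ 0) :
    G K μ w ≤ weightedJS (w 0) (w d) (μ 0) (μ d) :=
  G_eq_inf' hw ▸ Finset.inf'_le _ (Finset.mem_erase.2 ⟨hd, Finset.mem_univ d⟩)

lemma lt_G_iff (hw : ∀ a, 0 ≤ w a) {c : ℝ} :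
    c < G K μ w ↔ ∀ d ≠ 0, c < weightedJS (w 0) (w d) (μ 0) (μ d) := by
  simp [G_eq_inf' hw, Finset.lt_inf'_iff]

lemma G_pos (hμ : ∀ d, 0 < μ d) (hμ0 : μ 0 < 1) (hμd : ∀ d ≠ 0, μ d < μ 0)
    (hw : ∀ d, 0 < w d) : 0 < G K μ w :=
  (lt_G_iff fun d ↦ (hw d).le).2 fun d hd ↦ weightedJS_pos (hw 0) (hw d) (hμ d) (hμd d hd) hμ0

lemma pos_of_isMaxOn (hμ : ∀ d, 0 < μ d) (hμ0 : μ 0 < 1) (hμd : ∀ d ≠ 0, μ d < μ 0)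
    (hw : w ∈ simplex (K + 2)) (hmax : IsMaxOn (G K μ) (simplex (K + 2)) w) (d : Fin (K + 2)) :
    0 < w d := by
  have hG : 0 < G K μ w := (G_pos hμ hμ0 hμd fun _ ↦ by positivity).trans_le
    (isMaxOn_iff.1 hmax _ (inv_natCast_mem_simplex (K + 2)))
  refine (hw.1 d).lt_of_ne' fun hd ↦ hG.not_ge ?_
  rcases eq_or_ne d 0 with rfl | hd0
  · simpa [hd] using G_le_weightedJS hw.1 (d := 1) one_ne_zero
  · simpa [hd] using G_le_weightedJS hw.1 hd0

/-- If some term exceeded the minimum, shifting a little weight from that arm to arm `0` would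
raise every other term strictly and keep this one above the minimum. -/
lemma weightedJS_le_G_of_isMaxOn (hμ : ∀ d, 0 < μ d) (hμ0 : μ 0 < 1)
    (hμd : ∀ d ≠ 0, μ d < μ 0) (hw : w ∈ simplex (K + 2))
    (hmax : IsMaxOn (G K μ) (simplex (K + 2)) w) {b : Fin (K + 2)} (hb : b ≠ 0) :
    weightedJS (w 0) (w b) (μ 0) (μ b) ≤ G K μ w := by
  by_contra! hlt
  have hwpos := pos_of_isMaxOn hμ hμ0 hμd hw hmax
  set C := kl (μ b) (μ 0)
  obtain ⟨c, hc, hcC⟩ := exists_pos_mul_lt (sub_pos.2 hlt) C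
  set ε := min (w b) c
  have hε : 0 < ε := lt_min (hwpos b) hc
  have hεb : ε ≤ w b := min_le_left _ c
  have hεC : ε * C < weightedJS (w 0) (w b) (μ 0) (μ b) - G K μ w := by
    have hC : 0 ≤ C := kl_nonneg_s9 (hμ b).le ((hμd b hb).trans hμ0).le (hμ 0) hμ0
    nlinarith [min_le_right (w b) c]
  have hw' := add_smul_single_sub_single_mem_simplex hw 0 hε.le hεb
  refine (isMaxOn_iff.1 hmax _ hw').not_gt ((lt_G_iff hw'.1).2 fun d hd ↦ ?_)
  rcases eq_or_ne d b with rfl | hdb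
  · calc G K μ w < weightedJS (w 0) (w d) (μ 0) (μ d) - ε * C := by linarith
      _ ≤ weightedJS (w 0) (w d - ε) (μ 0) (μ d) := by
        linarith [weightedJS_le_weightedJS_add (hwpos 0).le (sub_nonneg.2 hεb)
          (by linarith [hwpos 0]) (sub_le_self _ hε.le) (hμ d)
          (hμd d hd).le hμ0]
      _ ≤ weightedJS (w 0 + ε) (w d - ε) (μ 0) (μ d) :=
        weightedJS_le_weightedJS (hwpos 0).le (sub_nonneg.2 hεb)
          (by linarith [hwpos 0]) (le_add_of_nonneg_right hε.le) le_rfl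
          (hμ d) (hμd d hd).le hμ0
      _ = _ := by simp [hb, sub_eq_add_neg]
  · calc G K μ w ≤ weightedJS (w 0) (w d) (μ 0) (μ d) := G_le_weightedJS hw.1 hd
      _ < weightedJS (w 0 + ε) (w d) (μ 0) (μ d) :=
        weightedJS_lt_weightedJS_left (hwpos 0).le (hwpos d) (lt_add_of_pos_right _ hε) (hμ d)
          (hμd d hd) hμ0
      _ = _ := by simp [hdb, hd, hb.symm]

end G

/-- Arm `1` of the paper is index `0`, arm `2` is index `1`. -/
theorem maximizer_monotone (K : ℕ) (μ : Fin (K + 2) → ℝ)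
    (hpos : ∀ a, 0 < μ a) (h1 : μ 0 < 1) (h2 : μ 1 < μ 0)
    (hsort : ∀ a b : Fin (K + 2), a ≠ 0 → a ≤ b → μ b ≤ μ a)
    (wstar : Fin (K + 2) → ℝ) (hws : wstar ∈ simplex (K + 2))
    (hmax : ∀ w ∈ simplex (K + 2), G K μ w ≤ G K μ wstar) :
    ∀ a b : Fin (K + 2), a ≠ 0 → a ≤ b → wstar b ≤ wstar a := by
  have hμd : ∀ d ≠ 0, μ d < μ 0 := fun d hd ↦
    (hsort 1 d one_ne_zero (Fin.one_le_of_ne_zero hd)).trans_lt h2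
  have hmax' : IsMaxOn (G K μ) (simplex (K + 2)) wstar := isMaxOn_iff.2 hmax
  have hwpos := pos_of_isMaxOn hpos h1 hμd hws hmax'
  intro a b ha hab
  by_contra! hlt
  have hb : b ≠ 0 := fun h ↦ ha (nonpos_iff_eq_zero.1 (h ▸ hab))
  have := calc
    weightedJS (wstar 0) (wstar a) (μ 0) (μ a) < weightedJS (wstar 0) (wstar b) (μ 0) (μ a) :=
      weightedJS_lt_weightedJS_right (hwpos 0) (hwpos a).le hlt (hpos a) (hμd a ha) h1
    _ ≤ weightedJS (wstar 0) (wstar b) (μ 0) (μ b) :=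
      weightedJS_antitoneOn (hwpos 0).le (hwpos b).le (add_pos (hwpos 0) (hwpos b)) h1
        ⟨hpos b, (hμd b hb).le⟩ ⟨hpos a, (hμd a ha).le⟩ (hsort a b ha hab)
    _ ≤ G K μ wstar := weightedJS_le_G_of_isMaxOn hpos h1 hμd hws hmax' hb
    _ ≤ weightedJS (wstar 0) (wstar a) (μ 0) (μ a) := G_le_weightedJS hws.1 ha
  exact lt_irrefl _ this
end
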